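/- If L_A(u) ≥ 0 for every piecewise linear convex function u on the closed polytope (i.e. every maximum of finitely many affine functions with rational coefficients), then L_A(u) ≥ 0 for every continuous convex function u on the closed polytope. -/

import Mathlib

open MeasureTheory Filter
open scoped ENNReal Topology

noncomputable section

namespace ToricKS

/-- Euclidean space `ℝⁿ`. -/
abbrev E (n : ℕ) : Type := EuclideanSpace ℝ (Fin n)

/-- The open polytope `Δ = {x | ⟨ν k, x⟩ > c k for all k}`. -/
def Poly {n d : ℕ} (ν : Fin d → E n) (c : Fin d → ℝ) : Set (E n) :=
  {x | ∀ k, c k < (inner ℝ (ν k) x : ℝ)}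

/-- The facet `F k = closure Δ ∩ {x | ⟨ν k, x⟩ = c k}`. -/
def Facet {n d : ℕ} (ν : Fin d → E n) (c : Fin d → ℝ) (k : Fin d) : Set (E n) :=
  closure (Poly ν c) ∩ {x | (inner ℝ (ν k) x : ℝ) = c k}

/-- The boundary measure `σ`: on each facet `F k`, `‖ν k‖⁻¹` times the
`(n-1)`-dimensional Hausdorff measure. -/
def bdryMeasure {n d : ℕ} (ν : Fin d → E n) (c : Fin d → ℝ) : Measure (E n) :=
  ∑ k, ENNReal.ofReal (‖ν k‖⁻¹) •
    ((MeasureTheory.Measure.hausdorffMeasure ((n : ℝ) - 1)).restrict (Facet ν c k))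

/-- The partial derivative `∂f/∂x_i`. -/
def pder {n : ℕ} (i : Fin n) (f : E n → ℝ) (x : E n) : ℝ :=
  fderiv ℝ f x (EuclideanSpace.single i 1)

/-- The Hessian matrix `(∂²f/∂x_i∂x_j)`. -/
def hessM {n : ℕ} (f : E n → ℝ) (x : E n) : Matrix (Fin n) (Fin n) ℝ :=
  Matrix.of fun i j => pder i (pder j f) x

/-- The linear functional `L_A(u) = ∫_{∂Δ} u dσ - ∫_Δ A u dμ`. -/
def LA {n d : ℕ} (ν : Fin d → E n) (c : Fin d → ℝ) (A u : E n → ℝ) : ℝ :=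
  ∫ x, u x ∂(bdryMeasure ν c) - ∫ x in Poly ν c, A x * u x

/-- The boundary norm `‖u‖_b = ∫_{∂Δ} u dσ`. -/
def normB {n d : ℕ} (ν : Fin d → E n) (c : Fin d → ℝ) (u : E n → ℝ) : ℝ :=
  ∫ x, u x ∂(bdryMeasure ν c)

/-- The class `C̃` of normalized convex functions: continuous on the closed polytope,
smooth inside, with `u ≥ u(p₀) = 0`. -/
def Ctilde {n d : ℕ} (ν : Fin d → E n) (c : Fin d → ℝ) (p₀ : E n) : Set (E n → ℝ) :=
  {u | ConvexOn ℝ (closure (Poly ν c)) u ∧ ContinuousOn u (closure (Poly ν c)) ∧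
       ContDiffOn ℝ (⊤ : ℕ∞) u (Poly ν c) ∧ u p₀ = 0 ∧ ∀ x ∈ closure (Poly ν c), 0 ≤ u x}

/-- The Guillemin function `u₀(x) = Σ_k δ_k(x) log δ_k(x)`, `δ_k(x) = ⟨ν k, x⟩ - c k`. -/
def GuilleminU0 {n d : ℕ} (ν : Fin d → E n) (c : Fin d → ℝ) (x : E n) : ℝ :=
  ∑ k, ((inner ℝ (ν k) x : ℝ) - c k) * Real.log ((inner ℝ (ν k) x : ℝ) - c k)

/-- The class `S`: continuous convex functions on the closed polytope, smooth with
positive definite Hessian inside, with `u - u₀` extending smoothly to the closed polytope. -/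
def SpaceS {n d : ℕ} (ν : Fin d → E n) (c : Fin d → ℝ) : Set (E n → ℝ) :=
  {v | ConvexOn ℝ (closure (Poly ν c)) v ∧ ContinuousOn v (closure (Poly ν c)) ∧
       ContDiffOn ℝ (⊤ : ℕ∞) v (Poly ν c) ∧ (∀ x ∈ Poly ν c, (hessM v x).PosDef) ∧
       ∃ g : E n → ℝ, ContDiffOn ℝ (⊤ : ℕ∞) g (closure (Poly ν c)) ∧
         ∀ x ∈ closure (Poly ν c), v x - GuilleminU0 ν c x = g x}

/-- `v` solves the Abreu equation `Σ_{i,j} ∂²v^{ij}/∂x_i∂x_j = -A` on `Δ`,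
where `(v^{ij})` is the pointwise inverse of the Hessian of `v`. -/
def AbreuSol {n d : ℕ} (ν : Fin d → E n) (c : Fin d → ℝ) (A v : E n → ℝ) : Prop :=
  ∀ x ∈ Poly ν c, ∑ i, ∑ j, pder i (pder j (fun y => (hessM v y)⁻¹ i j)) x = -A x

/-- The class `C_*^P`: locally uniform limits on `Δ` of sequences in `C̃` with
boundary norm at most `P`. -/
def CstarP {n d : ℕ} (ν : Fin d → E n) (c : Fin d → ℝ) (p₀ : E n) (P : ℝ) : Set (E n → ℝ) :=
  {u | ConvexOn ℝ (Poly ν c) u ∧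
       ∃ uk : ℕ → E n → ℝ, (∀ k, uk k ∈ Ctilde ν c p₀ ∧ normB ν c (uk k) ≤ P) ∧
         TendstoLocallyUniformlyOn uk u atTop (Poly ν c)}

/-- Extension of `u` to a boundary point `q` along the ray from `p₀`:
`u(q) = lim_{t→1⁻} u(p₀ + t(q - p₀)) ∈ [0,∞]`. -/
def bdryExt {n : ℕ} (p₀ : E n) (u : E n → ℝ) (q : E n) : ℝ≥0∞ :=
  limsup (fun t : ℝ => ENNReal.ofReal (u (p₀ + t • (q - p₀)))) (nhdsWithin 1 (Set.Iio 1))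

/-- `L_A(u)` for `u ∈ C_*^P`, using the boundary extension of `u`. -/
def LAstar {n d : ℕ} (ν : Fin d → E n) (c : Fin d → ℝ) (p₀ : E n) (A u : E n → ℝ) : ℝ :=
  (∫⁻ q, bdryExt p₀ u q ∂(bdryMeasure ν c)).toReal - ∫ x in Poly ν c, A x * u x

/-- The Mabuchi functional `F_A(u) = -∫_Δ log det(∂²u/∂x_i∂x_j) dμ + L_A(u)`. -/
def MabuchiF {n d : ℕ} (ν : Fin d → E n) (c : Fin d → ℝ) (A u : E n → ℝ) : ℝ :=
  -(∫ x in Poly ν c, Real.log (hessM u x).det) + LA ν c A u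

/-- A piecewise linear convex function: the maximum of finitely many affine functions. -/
def IsPLConvex {n : ℕ} (u : E n → ℝ) : Prop :=
  ∃ (m : ℕ) (w : Fin (m + 1) → E n) (b : Fin (m + 1) → ℝ),
    ∀ x, u x = ⨆ i, ((inner ℝ (w i) x : ℝ) + b i)

/-- A piecewise linear convex function with rational coefficients. -/
def IsRatPLConvex {n : ℕ} (u : E n → ℝ) : Prop :=
  ∃ (m : ℕ) (w : Fin (m + 1) → Fin n → ℚ) (b : Fin (m + 1) → ℚ),
    ∀ x, u x = ⨆ i, (∑ j, (w i j : ℝ) * x j + (b i : ℝ))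


/-! ### Auxiliary lemmas -/

lemma facet_subset_closure {n d : ℕ} (ν : Fin d → E n) (c : Fin d → ℝ) (k : Fin d) :
    Facet ν c k ⊆ closure (Poly ν c) := Set.inter_subset_left

lemma poly_isOpen {n d : ℕ} (ν : Fin d → E n) (c : Fin d → ℝ) : IsOpen (Poly ν c) := by
  have : Poly ν c = ⋂ k, {x : E n | c k < (inner ℝ (ν k) x : ℝ)} := by
    ext x; simp [Poly, Set.mem_iInter]
  rw [this]
  exact isOpen_iInter_of_finite fun k =>
    isOpen_lt continuous_const (Continuous.inner continuous_const continuous_id)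

lemma hausdorff_bounded_lt_top {m : ℕ} {s : Set (EuclideanSpace ℝ (Fin m))}
    (hs : Bornology.IsBounded s) : μH[(m:ℝ)] s < ∞ := by
  have hd : (0:ℝ) ≤ (m:ℝ) := by positivity
  have hanti := PiLp.antilipschitzWith_ofLp 2 (fun _ : Fin m => ℝ)
  have hlip := PiLp.lipschitzWith_ofLp 2 (fun _ : Fin m => ℝ)
  have h1 : μH[(m:ℝ)] s ≤ _ * μH[(m:ℝ)] ((WithLp.equiv 2 (Fin m → ℝ)) '' s) :=
    hanti.le_hausdorffMeasure_image hd s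
  have hb : Bornology.IsBounded ((WithLp.equiv 2 (Fin m → ℝ)) '' s) := hlip.isBounded_image hs
  obtain ⟨r, hr⟩ := hb.subset_closedBall 0
  have hpi : (μH[(m:ℝ)] : Measure (Fin m → ℝ)) = volume := by
    have := hausdorffMeasure_pi_real (ι := Fin m)
    simpa using this
  have h2 : μH[(m:ℝ)] ((WithLp.equiv 2 (Fin m → ℝ)) '' s) < ∞ := by
    rw [hpi]
    exact lt_of_le_of_lt (measure_mono hr) (isCompact_closedBall 0 r).measure_lt_top
  exact lt_of_le_of_lt h1
    (ENNReal.mul_lt_top (ENNReal.rpow_lt_top_of_nonneg hd ENNReal.coe_ne_top) h2)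

lemma hausdorff_hyperplane_lt_top {n : ℕ} (hn : 1 ≤ n) {ν : E n} (hν : ν ≠ 0) (c : ℝ)
    {s : Set (E n)} (hs : Bornology.IsBounded s) :
    μH[(n:ℝ)-1] (s ∩ {x : E n | (inner ℝ ν x : ℝ) = c}) < ∞ := by
  have hd : (0:ℝ) ≤ (n:ℝ) - 1 := by
    have : (1:ℝ) ≤ (n:ℝ) := by exact_mod_cast hn
    linarith
  set W : Submodule ℝ (E n) := (ℝ ∙ ν)ᗮ with hW
  have hdim : Module.finrank ℝ W = n - 1 := by
    have h2 := Submodule.finrank_add_finrank_orthogonal (K := (ℝ ∙ ν : Submodule ℝ (E n)))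
    rw [finrank_span_singleton hν, finrank_euclideanSpace_fin, ← hW] at h2
    omega
  have hcast : ((n - 1 : ℕ) : ℝ) = (n:ℝ) - 1 := by
    have := Nat.cast_sub hn (R := ℝ)
    simpa using this
  let e : W ≃ₗᵢ[ℝ] EuclideanSpace ℝ (Fin (n-1)) :=
    (stdOrthonormalBasis ℝ W).repr.trans
      (LinearIsometryEquiv.piLpCongrLeft 2 ℝ ℝ (finCongr hdim))
  set p : E n := (c / ‖ν‖^2) • ν with hp
  have hpin : (inner ℝ ν p : ℝ) = c := by
    rw [hp, real_inner_smul_right, real_inner_self_eq_norm_sq]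
    field_simp [norm_ne_zero_iff.2 hν]
  let φ : EuclideanSpace ℝ (Fin (n-1)) → E n := fun y => ((e.symm y : W) : E n) + p
  have hφ : Isometry φ := by
    have h1 : Isometry (fun x : E n => x + p) := Isometry.of_dist_eq (by simp [dist_eq_norm])
    exact h1.comp ((Submodule.subtypeₗᵢ W).isometry.comp e.symm.isometry)
  obtain ⟨r, hr⟩ := hs.subset_closedBall 0
  have hsub : s ∩ {x : E n | (inner ℝ ν x : ℝ) = c} ⊆ φ '' (Metric.closedBall 0 (r + ‖p‖)) := by
    rintro x ⟨hxs, hxc⟩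
    have hxW : x - p ∈ W := by
      rw [hW, Submodule.mem_orthogonal_singleton_iff_inner_right, inner_sub_right, hxc, hpin,
        sub_self]
    refine ⟨e ⟨x - p, hxW⟩, ?_, ?_⟩
    · rw [Metric.mem_closedBall, dist_zero_right, e.norm_map]
      have h2 : ‖x - p‖ ≤ ‖x‖ + ‖p‖ := norm_sub_le x p
      have hx : ‖x‖ ≤ r := by simpa [Metric.mem_closedBall, dist_zero_right] using hr hxs
      calc ‖(⟨x - p, hxW⟩ : W)‖ = ‖x - p‖ := rfl
        _ ≤ r + ‖p‖ := by linarith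
    · simp only [φ, LinearIsometryEquiv.symm_apply_apply]
      simp
  calc μH[(n:ℝ)-1] (s ∩ {x : E n | (inner ℝ ν x : ℝ) = c})
      ≤ μH[(n:ℝ)-1] (φ '' (Metric.closedBall 0 (r + ‖p‖))) := measure_mono hsub
    _ = μH[(n:ℝ)-1] (Metric.closedBall (0 : EuclideanSpace ℝ (Fin (n-1))) (r + ‖p‖)) :=
        hφ.hausdorffMeasure_image (Or.inl hd) _
    _ < ∞ := by
        rw [← hcast]
        exact hausdorff_bounded_lt_top Metric.isBounded_closedBall

lemma bdry_univ_lt_top {n d : ℕ} (hn : 1 ≤ n) (ν : Fin d → E n) (c : Fin d → ℝ)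
    (hcomp : IsCompact (closure (Poly ν c))) :
    bdryMeasure ν c Set.univ < ∞ := by
  rw [bdryMeasure, Measure.finset_sum_apply]
  refine ENNReal.sum_lt_top.2 fun k _ => ?_
  rw [Measure.smul_apply, Measure.restrict_apply_univ, smul_eq_mul]
  rcases eq_or_ne (ν k) 0 with h | h
  · simp [h]
  · refine ENNReal.mul_lt_top ENNReal.ofReal_lt_top ?_
    exact hausdorff_hyperplane_lt_top hn h (c k) hcomp.isBounded

lemma bdry_compl_closure {n d : ℕ} (ν : Fin d → E n) (c : Fin d → ℝ) :
    bdryMeasure ν c (closure (Poly ν c))ᶜ = 0 := by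
  rw [bdryMeasure, Measure.finset_sum_apply]
  refine Finset.sum_eq_zero fun k _ => ?_
  rw [Measure.smul_apply,
    Measure.restrict_apply isClosed_closure.measurableSet.compl]
  have : (closure (Poly ν c))ᶜ ∩ Facet ν c k = ∅ := by
    apply Set.eq_empty_of_forall_notMem
    rintro x ⟨hx1, hx2⟩
    exact hx1 (facet_subset_closure ν c k hx2)
  simp [this]

lemma bdry_restrict_closure {n d : ℕ} (ν : Fin d → E n) (c : Fin d → ℝ) :
    (bdryMeasure ν c).restrict (closure (Poly ν c)) = bdryMeasure ν c := by
  apply Measure.restrict_eq_self_of_ae_mem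
  rw [Filter.eventually_iff, MeasureTheory.mem_ae_iff]
  simpa using bdry_compl_closure ν c

lemma bdry_ae_mem_closure {n d : ℕ} (ν : Fin d → E n) (c : Fin d → ℝ) :
    ∀ᵐ x ∂(bdryMeasure ν c), x ∈ closure (Poly ν c) := by
  rw [Filter.eventually_iff, MeasureTheory.mem_ae_iff]
  simpa using bdry_compl_closure ν c

lemma exists_affine_minorant {n : ℕ} {K : Set (E n)}
    (hKcl : IsClosed K) {u : E n → ℝ} (hu : ConvexOn ℝ K u) (hcont : ContinuousOn u K)
    {x₀ : E n} (hx₀ : x₀ ∈ K) {ε : ℝ} (hε : 0 < ε) :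
    ∃ (l : E n →L[ℝ] ℝ) (b : ℝ), (∀ x ∈ K, l x + b ≤ u x) ∧ u x₀ - ε < l x₀ + b := by
  set S : Set ((E n) × ℝ) := {p | p.1 ∈ K ∧ u p.1 ≤ p.2} with hS
  have hSconv : Convex ℝ S := hu.convex_epigraph
  have hSclosed : IsClosed S := by
    have h1 : S = (K ×ˢ (Set.univ : Set ℝ)) ∩ (fun p : E n × ℝ => u p.1 - p.2) ⁻¹' (Set.Iic 0) := by
      ext p; simp [hS, Set.mem_prod, sub_nonpos]
    rw [h1]
    refine ContinuousOn.preimage_isClosed_of_isClosed ?_ (hKcl.prod isClosed_univ) isClosed_Iic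
    exact ((hcont.comp continuous_fst.continuousOn (fun p hp => hp.1)).sub
      continuous_snd.continuousOn)
  have hq : (x₀, u x₀ - ε) ∉ S := by
    rintro ⟨-, h⟩; simp only at h; linarith
  obtain ⟨f, r, hfq, hfS⟩ := geometric_hahn_banach_point_closed hSconv hSclosed hq
  set a : ℝ := f (0, 1) with ha
  set l₀ : E n →L[ℝ] ℝ := f.comp (ContinuousLinearMap.inl ℝ (E n) ℝ) with hl₀
  have hsplit : ∀ (x : E n) (y : ℝ), f (x, y) = l₀ x + y * a := by
    intro x y
    have : (x, y) = (x, (0:ℝ)) + y • ((0:E n), (1:ℝ)) := by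
      simp [Prod.ext_iff]
    rw [this, map_add, f.map_smul]
    simp [hl₀, ha, smul_eq_mul]
  have hmem : (x₀, u x₀) ∈ S := ⟨hx₀, le_refl (u x₀)⟩
  have h1 : l₀ x₀ + (u x₀ - ε) * a < r := by simpa [hsplit] using hfq
  have h2 : r < l₀ x₀ + u x₀ * a := by simpa [hsplit] using hfS _ hmem
  have hapos : 0 < a := by nlinarith
  refine ⟨(-a⁻¹) • l₀, r / a, ?_, ?_⟩
  · intro x hx
    have h3 : r < l₀ x + u x * a := by
      simpa [hsplit] using hfS (x, u x) ⟨hx, le_refl (u x)⟩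
    simp only [ContinuousLinearMap.smul_apply, smul_eq_mul]
    have key : (r - l₀ x) / a ≤ u x := by
      rw [div_le_iff₀ hapos]; nlinarith
    have heq : -a⁻¹ * l₀ x + r / a = (r - l₀ x) / a := by
      field_simp; ring
    linarith [heq ▸ key]
  · simp only [ContinuousLinearMap.smul_apply, smul_eq_mul]
    have key : u x₀ - ε < (r - l₀ x₀) / a := by
      rw [lt_div_iff₀ hapos]; nlinarith
    have heq : -a⁻¹ * l₀ x₀ + r / a = (r - l₀ x₀) / a := by
      field_simp; ring
    linarith

lemma clm_eq_sum {n : ℕ} (l : E n →L[ℝ] ℝ) (x : E n) :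
    l x = ∑ j, x j * l (EuclideanSpace.single j 1) := by
  have hx : x = ∑ j, x j • EuclideanSpace.single j (1:ℝ) := by
    have := (EuclideanSpace.basisFun (Fin n) ℝ).toBasis.sum_repr x
    simp only [OrthonormalBasis.coe_toBasis_repr_apply, EuclideanSpace.basisFun_repr,
      OrthonormalBasis.coe_toBasis, EuclideanSpace.basisFun_apply] at this
    exact this.symm
  conv_lhs => rw [hx]
  rw [map_sum]
  simp [smul_eq_mul]

lemma coord_le_norm {n : ℕ} (x : E n) (j : Fin n) : |x j| ≤ ‖x‖ := by
  have h := abs_real_inner_le_norm (EuclideanSpace.single j (1:ℝ)) x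
  rw [EuclideanSpace.inner_single_left] at h
  simpa [EuclideanSpace.norm_single] using h

lemma IsRatPLConvex.continuous {n : ℕ} {v : E n → ℝ} (hv : IsRatPLConvex v) :
    Continuous v := by
  obtain ⟨m, w, b, hvx⟩ := hv
  have hveq : v = fun x => ⨆ i, (∑ j, (w i j : ℝ) * x j + (b i : ℝ)) := funext hvx
  rw [hveq]
  have hcf : ∀ i : Fin (m+1), Continuous fun x : E n => ∑ j, (w i j : ℝ) * x j + (b i : ℝ) := by
    intro i
    refine Continuous.add ?_ continuous_const
    exact continuous_finset_sum _ fun j _ =>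
      continuous_const.mul (PiLp.proj 2 (𝕜 := ℝ) (fun _ : Fin n => ℝ) j).continuous
  have key : ∀ x : E n, (⨆ i, (∑ j, (w i j : ℝ) * x j + (b i : ℝ))) =
      Finset.univ.sup' Finset.univ_nonempty
        (fun i : Fin (m+1) => ∑ j, (w i j : ℝ) * x j + (b i : ℝ)) :=
    fun x => (Finset.sup'_univ_eq_ciSup _).symm
  simp only [key]
  rw [continuous_iff_continuousAt]
  intro x
  exact Filter.Tendsto.finset_sup'_nhds_apply _ fun i _ => (hcf i).continuousAt

lemma exists_ratPL_approx {n : ℕ} {K : Set (E n)} (hK : IsCompact K)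
    {u : E n → ℝ} (hu : ConvexOn ℝ K u) (hcont : ContinuousOn u K) {ε : ℝ} (hε : 0 < ε) :
    ∃ v : E n → ℝ, IsRatPLConvex v ∧ ∀ x ∈ K, |u x - v x| ≤ ε := by
  rcases K.eq_empty_or_nonempty with hKe | hKne
  · refine ⟨fun x => ⨆ i : Fin 1, (∑ j, ((0:ℚ):ℝ) * x j + ((0:ℚ):ℝ)),
      ⟨0, 0, 0, fun x => rfl⟩, by simp [hKe]⟩
  obtain ⟨R, hRK⟩ := hK.isBounded.subset_closedBall 0
  have hR : ∀ x ∈ K, ‖x‖ ≤ R := fun x hx => by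
    simpa [Metric.mem_closedBall, dist_zero_right] using hRK hx
  have hR0 : 0 ≤ R := le_trans (norm_nonneg _) (hR _ hKne.choose_spec)
  have hKcl : IsClosed K := hK.isClosed
  have hε4 : 0 < ε/4 := by linarith
  have hmin : ∀ y ∈ K, ∃ (l : E n →L[ℝ] ℝ) (b : ℝ),
      (∀ x ∈ K, l x + b ≤ u x) ∧ u y - ε/4 < l y + b :=
    fun y hy => exists_affine_minorant hKcl hu hcont hy hε4
  choose! l b hlb hly using hmin
  have hopen : ∀ y : E n, ∃ O : Set (E n), IsOpen O ∧
      ((fun x => u x - (l y x + b y)) ⁻¹' Set.Iio (ε/2)) ∩ K = O ∩ K := by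
    intro y
    have hc : ContinuousOn (fun x => u x - (l y x + b y)) K :=
      hcont.sub (((l y).continuous.continuousOn).add continuousOn_const)
    rcases (continuousOn_iff'.1 hc) (Set.Iio (ε/2)) isOpen_Iio with ⟨O, hO1, hO2⟩
    exact ⟨O, hO1, hO2⟩
  choose O hOopen hOeq using hopen
  have hcover : K ⊆ ⋃ y : K, O y := by
    intro x hx
    have h1 : u x - (l x x + b x) < ε/2 := by have := hly x hx; linarith
    have hxO : x ∈ O x ∩ K := by
      rw [← hOeq x]; exact ⟨h1, hx⟩
    exact Set.mem_iUnion.2 ⟨⟨x, hx⟩, hxO.1⟩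
  obtain ⟨t, ht⟩ := hK.elim_finite_subcover (fun y : K => O y) (fun y => hOopen y) hcover
  have htne : t.Nonempty := by
    obtain ⟨x, hx⟩ := hKne
    obtain ⟨y, hy, -⟩ := Set.mem_iUnion₂.1 (ht hx)
    exact ⟨y, hy⟩
  set L := t.toList with hL
  have hLne : L ≠ [] := by
    simp only [hL, ne_eq, Finset.toList_eq_nil]
    exact htne.ne_empty
  set m := L.length - 1 with hm
  have hmL : m + 1 = L.length := by
    have := List.length_pos_iff.2 hLne
    omega
  let idx : Fin (m+1) → K := fun i => L.get (Fin.cast hmL i)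
  set δ := (ε/4) / (n * R + 1) with hδ
  have hnR : (0:ℝ) < n * R + 1 := by positivity
  have hδ0 : 0 < δ := by positivity
  have hw' : ∀ (i : Fin (m+1)) (j : Fin n), ∃ q : ℚ,
      |l (idx i) (EuclideanSpace.single j 1) - q| < δ :=
    fun i j => exists_rat_near _ hδ0
  choose w' hw'' using hw'
  have hb' : ∀ i : Fin (m+1), ∃ q : ℚ, |b (idx i) - q| < δ := fun i => exists_rat_near _ hδ0
  choose b' hb'' using hb'
  set g : Fin (m+1) → E n → ℝ := fun i x => l (idx i) x + b (idx i) with hg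
  set f : Fin (m+1) → E n → ℝ := fun i x => ∑ j, (w' i j : ℝ) * x j + (b' i : ℝ) with hf
  have hfg : ∀ (i : Fin (m+1)), ∀ x ∈ K, |g i x - f i x| ≤ ε/4 := by
    intro i x hx
    have hxj : ∀ j, |x j| ≤ R := fun j => le_trans (coord_le_norm x j) (hR x hx)
    have h1 : g i x - f i x =
        (∑ j, x j * (l (idx i) (EuclideanSpace.single j 1) - (w' i j : ℝ)))
        + (b (idx i) - (b' i : ℝ)) := by
      simp only [hg, hf]
      rw [clm_eq_sum (l (idx i)) x]
      simp only [mul_sub, Finset.sum_sub_distrib]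
      rw [show (∑ j, (w' i j:ℝ) * x j) = ∑ j, x j * (w' i j:ℝ) from
        Finset.sum_congr rfl fun j _ => mul_comm _ _]
      ring
    rw [h1]
    have h2 : |∑ j, x j * (l (idx i) (EuclideanSpace.single j 1) - (w' i j : ℝ))| ≤ n * R * δ := by
      calc |∑ j, x j * (l (idx i) (EuclideanSpace.single j 1) - (w' i j : ℝ))|
          ≤ ∑ j, |x j * (l (idx i) (EuclideanSpace.single j 1) - (w' i j : ℝ))| :=
            Finset.abs_sum_le_sum_abs _ _
        _ ≤ ∑ _j : Fin n, R * δ := by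
            refine Finset.sum_le_sum fun j _ => ?_
            rw [abs_mul]
            exact mul_le_mul (hxj j) (le_of_lt (hw'' i j)) (abs_nonneg _) hR0
        _ = n * R * δ := by simp [Finset.sum_const]; ring
    have h3 : |b (idx i) - (b' i : ℝ)| ≤ δ := le_of_lt (hb'' i)
    have h4 : n * R * δ + δ = ε/4 := by
      rw [hδ]; field_simp
    calc |(∑ j, x j * (l (idx i) (EuclideanSpace.single j 1) - (w' i j : ℝ)))
          + (b (idx i) - (b' i : ℝ))| ≤ _ + _ := abs_add_le _ _
      _ ≤ n * R * δ + δ := add_le_add h2 h3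
      _ = ε/4 := h4
  refine ⟨fun x => ⨆ i, f i x, ⟨m, w', b', fun x => rfl⟩, ?_⟩
  intro x hx
  clear_value f g
  have hbdd : BddAbove (Set.range fun i => f i x) := (Set.finite_range _).bddAbove
  have hub : (⨆ i, f i x) ≤ u x + ε/4 := by
    refine ciSup_le fun i => ?_
    show f i x ≤ u x + ε/4
    have h1 := hfg i x hx
    have h2 : g i x ≤ u x := by rw [hg]; exact hlb (idx i) (idx i).2 x hx
    rw [abs_le] at h1
    obtain ⟨h1a, h1b⟩ := h1
    have : f i x ≤ g i x + ε/4 := by linarith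
    linarith
  have hlbd : u x - 3*(ε/4) ≤ ⨆ i, f i x := by
    obtain ⟨y, hyt, hxy⟩ := Set.mem_iUnion₂.1 (ht hx)
    obtain ⟨iL, hiL⟩ := List.mem_iff_get.1 ((Finset.mem_toList).2 hyt)
    let i : Fin (m+1) := Fin.cast hmL.symm iL
    have hidx : idx i = y := by
      simp only [idx, i, Fin.cast_cast]
      simpa using hiL
    have hxOy : x ∈ O y ∩ K := ⟨hxy, hx⟩
    rw [← hOeq y] at hxOy
    have h1 : u x - (l y x + b y) < ε/2 := hxOy.1
    have h2 := hfg i x hx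
    rw [abs_le] at h2
    have h3 : f i x ≤ ⨆ i, f i x := le_ciSup hbdd i
    have h4 : g i x = l y x + b y := by rw [hg]; simp [hidx]
    linarith [h2.1, h2.2, h3, h1, h4]
  rw [abs_le]
  constructor <;> linarith

/-- nonnegativity of `L_A` on rational piecewise linear convex functions
implies nonnegativity on all continuous convex functions. -/
theorem LA_nonneg_on_convex_of_nonneg_on_rat_PL
    {n d : ℕ} (hn : 1 ≤ n) (ν : Fin d → E n) (c : Fin d → ℝ)
    (hcomp : IsCompact (closure (Poly ν c)))
    (A : E n → ℝ) (hA : ContDiffOn ℝ (⊤ : ℕ∞) A (closure (Poly ν c)))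
    (hPL : ∀ u : E n → ℝ, IsRatPLConvex u → 0 ≤ LA ν c A u) :
    ∀ u : E n → ℝ, ContinuousOn u (closure (Poly ν c)) →
      ConvexOn ℝ (closure (Poly ν c)) u → 0 ≤ LA ν c A u := by
  intro u hucont huconv
  classical
  set K := closure (Poly ν c) with hK
  have hKcl : IsClosed K := isClosed_closure
  have hPsub : Poly ν c ⊆ K := subset_closure
  have hPmeas : MeasurableSet (Poly ν c) := (poly_isOpen ν c).measurableSet
  set σ := bdryMeasure ν c with hσ
  have hσfin : IsFiniteMeasure σ := ⟨bdry_univ_lt_top hn ν c hcomp⟩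
  have hσae : ∀ᵐ x ∂σ, x ∈ K := bdry_ae_mem_closure ν c
  have hPfin : IsFiniteMeasure (volume.restrict (Poly ν c)) := by
    constructor
    rw [Measure.restrict_apply_univ]
    exact lt_of_le_of_lt (measure_mono hPsub) hcomp.measure_lt_top
  -- bounds
  obtain ⟨Mu, hMu⟩ := hcomp.exists_bound_of_continuousOn hucont
  obtain ⟨MA, hMA⟩ := hcomp.exists_bound_of_continuousOn hA.continuousOn
  set MA' := max MA 0 with hMA'
  have hMA0 : 0 ≤ MA' := le_max_right _ _
  have hMA'' : ∀ x ∈ K, ‖A x‖ ≤ MA' := fun x hx => le_trans (hMA x hx) (le_max_left _ _)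
  -- integrability of continuous-on-K functions
  have integ_bdry : ∀ (φ : E n → ℝ), ContinuousOn φ K → Integrable φ σ := by
    intro φ hφ
    obtain ⟨M, hM⟩ := hcomp.exists_bound_of_continuousOn hφ
    have hmeas : AEStronglyMeasurable φ σ := by
      have := hφ.aestronglyMeasurable (μ := σ) hKcl.measurableSet
      rwa [hσ, bdry_restrict_closure ν c] at this
    exact Integrable.mono' (integrable_const M) hmeas
      (hσae.mono fun x hx => hM x hx)
  have integ_poly : ∀ (φ : E n → ℝ), ContinuousOn φ K →
      Integrable (fun x => A x * φ x) (volume.restrict (Poly ν c)) := by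
    intro φ hφ
    obtain ⟨M, hM⟩ := hcomp.exists_bound_of_continuousOn hφ
    have hAφ : ContinuousOn (fun x => A x * φ x) K := hA.continuousOn.mul hφ
    have hmeas : AEStronglyMeasurable (fun x => A x * φ x) (volume.restrict (Poly ν c)) :=
      ((hAφ.mono hPsub).aestronglyMeasurable hPmeas)
    have haeP : ∀ᵐ x ∂(volume.restrict (Poly ν c)), x ∈ Poly ν c := ae_restrict_mem hPmeas
    refine Integrable.mono' (integrable_const (MA' * M)) hmeas (haeP.mono fun x hx => ?_)
    have hxK : x ∈ K := hPsub hx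
    calc ‖A x * φ x‖ = ‖A x‖ * ‖φ x‖ := norm_mul _ _
      _ ≤ MA' * M := mul_le_mul (hMA'' x hxK) (hM x hxK) (norm_nonneg _)
          hMA0
  -- the constant
  set Cσ := (σ Set.univ).toReal with hCσ
  set CP := ((volume.restrict (Poly ν c)) Set.univ).toReal with hCP
  have hCσ0 : 0 ≤ Cσ := ENNReal.toReal_nonneg
  have hCP0 : 0 ≤ CP := ENNReal.toReal_nonneg
  set C := Cσ + MA' * CP with hC
  have hC0 : 0 ≤ C := by positivity
  -- key ε-approximation estimate
  have key : ∀ ε : ℝ, 0 < ε → 0 ≤ LA ν c A u + ε * C := by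
    intro ε hε
    obtain ⟨v, hvPL, hvapp⟩ := exists_ratPL_approx hcomp huconv hucont hε
    have hvcont : Continuous v := hvPL.continuous
    have h0v : 0 ≤ LA ν c A v := hPL v hvPL
    -- integrability
    have Iu : Integrable u σ := integ_bdry u hucont
    have Iv : Integrable v σ := integ_bdry v hvcont.continuousOn
    have IAu : Integrable (fun x => A x * u x) (volume.restrict (Poly ν c)) :=
      integ_poly u hucont
    have IAv : Integrable (fun x => A x * v x) (volume.restrict (Poly ν c)) :=
      integ_poly v hvcont.continuousOn
    -- boundary estimate
    have hb1 : |∫ x, u x ∂σ - ∫ x, v x ∂σ| ≤ ε * Cσ := by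
      rw [← integral_sub Iu Iv]
      have := norm_integral_le_of_norm_le_const (μ := σ)
        (f := fun x => u x - v x) (C := ε)
        (hσae.mono fun x hx => by
          simpa [Real.norm_eq_abs] using hvapp x hx)
      simpa [Real.norm_eq_abs, hCσ, measureReal_def] using this
    -- interior estimate
    have hb2 : |(∫ x in Poly ν c, A x * u x) - ∫ x in Poly ν c, A x * v x| ≤ ε * (MA' * CP) := by
      rw [← integral_sub IAu IAv]
      have haeP : ∀ᵐ x ∂(volume.restrict (Poly ν c)), x ∈ Poly ν c := ae_restrict_mem hPmeas
      have := norm_integral_le_of_norm_le_const (μ := volume.restrict (Poly ν c))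
        (f := fun x => A x * u x - A x * v x) (C := MA' * ε)
        (haeP.mono fun x hx => by
          have hxK : x ∈ K := hPsub hx
          show ‖A x * u x - A x * v x‖ ≤ MA' * ε
          have : A x * u x - A x * v x = A x * (u x - v x) := by ring
          rw [this]
          calc ‖A x * (u x - v x)‖ = ‖A x‖ * ‖u x - v x‖ := norm_mul _ _
            _ ≤ MA' * ε := mul_le_mul (hMA'' x hxK)
                (by simpa [Real.norm_eq_abs] using hvapp x hxK) (norm_nonneg _) hMA0)
      rw [Real.norm_eq_abs] at this
      calc |(∫ x in Poly ν c, (A x * u x - A x * v x))| ≤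
          MA' * ε * ((volume.restrict (Poly ν c)) Set.univ).toReal := this
        _ = ε * (MA' * CP) := by rw [hCP]; ring
    -- combine
    have hdiff : |LA ν c A u - LA ν c A v| ≤ ε * C := by
      rw [LA, LA]
      have h1 : (∫ x, u x ∂σ) - (∫ x in Poly ν c, A x * u x) -
          ((∫ x, v x ∂σ) - ∫ x in Poly ν c, A x * v x) =
          ((∫ x, u x ∂σ) - ∫ x, v x ∂σ) -
          ((∫ x in Poly ν c, A x * u x) - ∫ x in Poly ν c, A x * v x) := by ring
      rw [← hσ, h1]
      calc |((∫ x, u x ∂σ) - ∫ x, v x ∂σ) -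
          ((∫ x in Poly ν c, A x * u x) - ∫ x in Poly ν c, A x * v x)|
          ≤ |(∫ x, u x ∂σ) - ∫ x, v x ∂σ| +
            |(∫ x in Poly ν c, A x * u x) - ∫ x in Poly ν c, A x * v x| := abs_sub _ _
        _ ≤ ε * Cσ + ε * (MA' * CP) := add_le_add hb1 hb2
        _ = ε * C := by rw [hC]; ring
    rw [abs_le] at hdiff
    linarith [hdiff.1, hdiff.2]
  -- conclude
  by_contra hneg
  push_neg at hneg
  have hε : 0 < -LA ν c A u / (2 * (C + 1)) := by
    apply div_pos (by linarith) (by linarith)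
  have := key _ hε
  have hlt : -LA ν c A u / (2 * (C + 1)) * C < -LA ν c A u := by
    rw [div_mul_eq_mul_div, div_lt_iff₀ (by linarith : (0:ℝ) < 2 * (C + 1))]
    nlinarith
  linarith


end ToricKS
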